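/- Let I ∈ Δ₂ be an increasing bijection of (0,1) onto (0,1). Let S be a map from {f measurable on (0,1) : ‖f‖_{m_I} < ∞} to measurable functions on (0,1) that is sublinear, i.e. |S(f+g)| ≤ |Sf| + |Sg| a.e. and |S(af)| = |a|·|Sf| a.e. for scalars a, and suppose there is C₀ > 0 with ‖Sf‖_∞ ≤ C₀·‖f‖_∞ and ‖Sf‖_{m_I} ≤ C₀·‖f‖_{m_I} for all f. Then there exists C > 0 such that (Sf)^*(t) ≤ C·(S_I f)(t) for all f with ‖f‖_{m_I} < ∞ and all t ∈ (0,1). If in addition I has the average property, then also (Sf)^{**}(t) ≤ C·(S_I f)(t) for such f and t, and (S_I f)^{**}(t) ≤ C·(S_I f)(t) for all f ∈ M_+(0,1) and t ∈ (0,1). -/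

import Mathlib

/-!
Fix `t` and split `f = min f λ + (f - λ)` at the level `λ = f^*(t)`. The `L^∞` bound controls `S`
of the first part by `C₀ λ ≤ C₀ S_I f(t)`. The second part has rearrangement at most `f^*` and
vanishing after `t`, so its `m_I` norm is at most `sup_{s≤t} I(s) f^*(s) = I(t) S_I f(t)`, and the
`m_I` bound gives `I(t) (S(f - λ))^*(t) ≤ C₀ I(t) S_I f(t)`.

For the averaged estimates, both `(Sf)^*` and `(S_I f)^*` (the latter because `S_I f` is
nonincreasing) are bounded at `s ≤ t` by a multiple of `S_I f(s) ≤ I(t) S_I f(t) / I(s)`, and the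
average property integrates `1 / I` over `(0, t)`.
-/

open MeasureTheory Set Filter
open scoped ENNReal

noncomputable section

/-- The nonincreasing rearrangement of `f` over `(0,1)`. -/
def rearr (f : ℝ → ℝ≥0∞) (t : ℝ) : ℝ≥0∞ :=
  sInf {l : ℝ≥0∞ | volume {s ∈ Set.Ioo (0:ℝ) 1 | l < f s} ≤ ENNReal.ofReal t}

/-- The maximal nonincreasing rearrangement `f^{**}(t) = (1/t) ∫_0^t f^*(s) ds`. -/
def dstar (f : ℝ → ℝ≥0∞) (t : ℝ) : ℝ≥0∞ :=
  (ENNReal.ofReal t)⁻¹ * ∫⁻ s in Set.Ioo (0:ℝ) t, rearr f s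

/-- The `L¹(0,1)` norm. -/
def lOne (f : ℝ → ℝ≥0∞) : ℝ≥0∞ := ∫⁻ t in Set.Ioo (0:ℝ) 1, f t

/-- The norm of the Marcinkiewicz-type space `m_I`. -/
def mNorm (I : ℝ → ℝ) (f : ℝ → ℝ≥0∞) : ℝ≥0∞ :=
  ⨆ t ∈ Set.Ioo (0:ℝ) 1, ENNReal.ofReal (I t) * rearr f t

/-- The norm of `m_Ĩ` where `Ĩ(t) = t / I(t)`. -/
def mNormTilde (I : ℝ → ℝ) (f : ℝ → ℝ≥0∞) : ℝ≥0∞ :=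
  ⨆ t ∈ Set.Ioo (0:ℝ) 1, ENNReal.ofReal (t / I t) * rearr f t

/-- The supremum operator `S_I f(t) = (1/I(t)) sup_{0<s≤t} I(s) f^*(s)`. -/
def SI (I : ℝ → ℝ) (f : ℝ → ℝ≥0∞) : ℝ → ℝ≥0∞ := fun t =>
  (ENNReal.ofReal (I t))⁻¹ * ⨆ s ∈ Set.Ioc (0:ℝ) t, ENNReal.ofReal (I s) * rearr f s

/-- The supremum operator `T_I f(t) = (I(t)/t) sup_{t≤s<1} (s/I(s)) f^*(s)`. -/
def TI (I : ℝ → ℝ) (f : ℝ → ℝ≥0∞) : ℝ → ℝ≥0∞ := fun t =>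
  ENNReal.ofReal (I t / t) * ⨆ s ∈ Set.Ico t 1, ENNReal.ofReal (s / I s) * rearr f s

/-- `H_I f(t) = ∫_t^1 f(s)/I(s) ds`. -/
def HI (I : ℝ → ℝ) (f : ℝ → ℝ≥0∞) : ℝ → ℝ≥0∞ := fun t =>
  ∫⁻ s in Set.Ioo t 1, f s / ENNReal.ofReal (I s)

/-- `R_I f(t) = (1/I(t)) ∫_0^t f(s) ds`. -/
def RI (I : ℝ → ℝ) (f : ℝ → ℝ≥0∞) : ℝ → ℝ≥0∞ := fun t =>
  (ENNReal.ofReal (I t))⁻¹ * ∫⁻ s in Set.Ioo (0:ℝ) t, f s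

/-- `I : (0,1) → (0,1)` is quasiconcave: a nondecreasing bijection of `(0,1)` onto `(0,1)`
with `I(t)/t` nonincreasing, `I(0+) = 0` and `I(1-) = 1`. -/
def Quasiconcave (I : ℝ → ℝ) : Prop :=
  Set.BijOn I (Set.Ioo 0 1) (Set.Ioo 0 1) ∧
  MonotoneOn I (Set.Ioo 0 1) ∧
  AntitoneOn (fun t => I t / t) (Set.Ioo 0 1) ∧
  Tendsto I (nhdsWithin 0 (Set.Ioo 0 1)) (nhds 0) ∧
  Tendsto I (nhdsWithin 1 (Set.Ioo 0 1)) (nhds 1)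

/-- Condition (★): `∫_0^t I(s)/s ds ≲ I(t)`. -/
def StarCond (I : ℝ → ℝ) : Prop :=
  ∃ C : ℝ, 0 < C ∧ ∀ t ∈ Set.Ioo (0:ℝ) 1,
    ∫⁻ s in Set.Ioo (0:ℝ) t, ENNReal.ofReal (I s / s) ≤ ENNReal.ofReal (C * I t)

/-- The average property: `∫_0^t ds/I(s) ≲ t/I(t)`. -/
def AvgProp (I : ℝ → ℝ) : Prop :=
  ∃ C : ℝ, 0 < C ∧ ∀ t ∈ Set.Ioo (0:ℝ) 1,
    ∫⁻ s in Set.Ioo (0:ℝ) t, ENNReal.ofReal (1 / I s) ≤ ENNReal.ofReal (C * (t / I t))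

/-- The condition `∫_t^1 I(s)/s² ds ≲ (1/t) ∫_0^t I(s)/s ds`. -/
def MaxCond (I : ℝ → ℝ) : Prop :=
  ∃ C : ℝ, 0 < C ∧ ∀ t ∈ Set.Ioo (0:ℝ) 1,
    ∫⁻ s in Set.Ioo t 1, ENNReal.ofReal (I s / s ^ 2) ≤
      ENNReal.ofReal (C / t) * ∫⁻ s in Set.Ioo (0:ℝ) t, ENNReal.ofReal (I s / s)

/-- The class `𝒬` of quasiconcave functions. -/
def ClassQ (I : ℝ → ℝ) : Prop :=
  Quasiconcave I ∧ StarCond I ∧ AvgProp I ∧ MaxCond I ∧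
  ∃ c d : ℝ,
    IsLUB {l : ℝ | 0 ≤ l ∧ ∀ t ∈ Set.Ioo (0:ℝ) 1,
      ENNReal.ofReal (l * (I t / t ^ 2 - 1)) ≤
        ∫⁻ s in Set.Ioo t 1, ENNReal.ofReal (I s / s ^ 3)} c ∧
    IsLeast {e : ℝ | 0 < e ∧ ∀ t ∈ Set.Ioo (0:ℝ) 1,
      ∫⁻ s in Set.Ioo t 1, ENNReal.ofReal (I s / s ^ 2) ≤
        ENNReal.ofReal (e * (I t / t))} d ∧
    (1 - c) * d ≤ c

/-- The `Δ₂` condition: `I(2t) ≤ C I(t)` for `t ∈ (0,1/2)`. -/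
def Delta2 (I : ℝ → ℝ) : Prop :=
  ∃ C : ℝ, 0 < C ∧ ∀ t ∈ Set.Ioo (0:ℝ) (1/2), I (2 * t) ≤ C * I t

/-- A rearrangement-invariant Banach function norm on `M₊(0,1)`. -/
def IsRiNorm (ρ : (ℝ → ℝ≥0∞) → ℝ≥0∞) : Prop :=
  (∀ f : ℝ → ℝ≥0∞, Measurable f →
      (ρ f = 0 ↔ f =ᵐ[volume.restrict (Set.Ioo (0:ℝ) 1)] 0)) ∧
  (∀ f : ℝ → ℝ≥0∞, Measurable f → ∀ a : ℝ, 0 ≤ a →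
      ρ (fun t => ENNReal.ofReal a * f t) = ENNReal.ofReal a * ρ f) ∧
  (∀ f g : ℝ → ℝ≥0∞, Measurable f → Measurable g →
      ρ (fun t => f t + g t) ≤ ρ f + ρ g) ∧
  (∀ f g : ℝ → ℝ≥0∞, Measurable f → Measurable g →
      (∀ᵐ t ∂(volume.restrict (Set.Ioo (0:ℝ) 1)), f t ≤ g t) → ρ f ≤ ρ g) ∧
  (∀ (fn : ℕ → ℝ → ℝ≥0∞) (f : ℝ → ℝ≥0∞), (∀ n, Measurable (fn n)) → Measurable f →
      (∀ᵐ t ∂(volume.restrict (Set.Ioo (0:ℝ) 1)), Monotone (fun n => fn n t)) →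
      (∀ᵐ t ∂(volume.restrict (Set.Ioo (0:ℝ) 1)), (⨆ n, fn n t) = f t) →
      (⨆ n, ρ (fn n)) = ρ f) ∧
  (ρ (fun _ => 1) < ⊤) ∧
  (∃ c : ℝ, 0 < c ∧ ∀ f : ℝ → ℝ≥0∞, Measurable f →
      ∫⁻ t in Set.Ioo (0:ℝ) 1, f t ≤ ENNReal.ofReal c * ρ f) ∧
  (∀ f : ℝ → ℝ≥0∞, Measurable f → ρ f = ρ (rearr f))

/-- The associate norm `ρ'`. -/
def assoc (ρ : (ℝ → ℝ≥0∞) → ℝ≥0∞) (f : ℝ → ℝ≥0∞) : ℝ≥0∞ :=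
  ⨆ (g : ℝ → ℝ≥0∞) (_ : Measurable g ∧ ρ g ≤ 1),
    ∫⁻ t in Set.Ioo (0:ℝ) 1, f t * g t

/-- The optimal target norm `‖f‖_{Y_X}` of the r.i. norm `ρ = ‖·‖_X` under `H_I`. -/
def optTargetNorm (I : ℝ → ℝ) (ρ : (ℝ → ℝ≥0∞) → ℝ≥0∞) (f : ℝ → ℝ≥0∞) : ℝ≥0∞ :=
  ⨆ (g : ℝ → ℝ≥0∞) (_ : Measurable g ∧ assoc ρ (RI I (rearr g)) ≤ 1),
    ∫⁻ t in Set.Ioo (0:ℝ) 1, rearr f t * rearr g t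

/-- The optimal domain norm `‖f‖_{X_Y} = sup_{h ∼ f} ‖H_I h‖_Y`. -/
def optDomainNorm (I : ℝ → ℝ) (ρY : (ℝ → ℝ≥0∞) → ℝ≥0∞) (f : ℝ → ℝ≥0∞) : ℝ≥0∞ :=
  ⨆ (h : ℝ → ℝ≥0∞)
    (_ : Measurable h ∧ ∀ t ∈ Set.Ioo (0:ℝ) 1, rearr h t = rearr f t),
      ρY (HI I h)

/-- `H_I : X → Y` boundedly. -/
def HIBounded (I : ℝ → ℝ) (ρX ρY : (ℝ → ℝ≥0∞) → ℝ≥0∞) : Prop :=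
  ∃ C : ℝ, 0 < C ∧ ∀ f : ℝ → ℝ≥0∞, Measurable f →
    ρY (HI I f) ≤ ENNReal.ofReal C * ρX f

/-- `X` is the optimal domain space for `Y` under `H_I`. -/
def IsOptimalDomain (I : ℝ → ℝ) (ρX ρY : (ℝ → ℝ≥0∞) → ℝ≥0∞) : Prop :=
  HIBounded I ρX ρY ∧
  ∀ ρZ : (ℝ → ℝ≥0∞) → ℝ≥0∞, IsRiNorm ρZ → HIBounded I ρZ ρY →
    ∃ C : ℝ, 0 < C ∧ ∀ f : ℝ → ℝ≥0∞, Measurable f →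
      ρX f ≤ ENNReal.ofReal C * ρZ f

/-- `Y` is the optimal target space for `X` under `H_I`. -/
def IsOptimalTarget (I : ℝ → ℝ) (ρX ρY : (ℝ → ℝ≥0∞) → ℝ≥0∞) : Prop :=
  HIBounded I ρX ρY ∧
  ∀ ρZ : (ℝ → ℝ≥0∞) → ℝ≥0∞, IsRiNorm ρZ → HIBounded I ρX ρZ →
    ∃ C : ℝ, 0 < C ∧ ∀ f : ℝ → ℝ≥0∞, Measurable f →
      ρZ f ≤ ENNReal.ofReal C * ρY f

lemma volume_sep_Ioo_eq_restrict (p : ℝ → Prop) :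
    volume {s ∈ Ioo (0:ℝ) 1 | p s} = volume.restrict (Ioo (0:ℝ) 1) {s | p s} := by
  rw [Measure.restrict_apply' measurableSet_Ioo, ofPred_inter_eq_sep]

lemma rearr_mono_ae {u v : ℝ → ℝ≥0∞} (h : u ≤ᵐ[volume.restrict (Ioo (0:ℝ) 1)] v) (t : ℝ) :
    rearr u t ≤ rearr v t := by
  refine sInf_le_sInf fun l hl => ?_
  simp only [mem_ofPred_eq, volume_sep_Ioo_eq_restrict] at hl ⊢
  exact le_trans (measure_mono_ae (h.mono fun s hs hlt => hlt.trans_le hs)) hl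

lemma rearr_mono {u v : ℝ → ℝ≥0∞} (h : u ≤ v) (t : ℝ) : rearr u t ≤ rearr v t :=
  rearr_mono_ae (Eventually.of_forall h) t

lemma rearr_antitone (f : ℝ → ℝ≥0∞) : Antitone (rearr f) :=
  fun _ _ h => sInf_le_sInf fun _ hl => le_trans hl (ENNReal.ofReal_le_ofReal h)

lemma volume_rearr_lt_le (f : ℝ → ℝ≥0∞) (t : ℝ) :
    volume {s ∈ Ioo (0:ℝ) 1 | rearr f t < f s} ≤ ENNReal.ofReal t := by
  have hne : {l : ℝ≥0∞ | volume {s ∈ Ioo (0:ℝ) 1 | l < f s} ≤ ENNReal.ofReal t}.Nonempty :=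
    ⟨⊤, by simp⟩
  obtain ⟨u, hu_anti, hu_lim, hu_mem⟩ := exists_seq_tendsto_sInf hne (OrderBot.bddBelow _)
  have hunion : {s ∈ Ioo (0:ℝ) 1 | rearr f t < f s} = ⋃ n, {s ∈ Ioo (0:ℝ) 1 | u n < f s} := by
    ext s
    simp only [mem_ofPred_eq, mem_iUnion]
    refine ⟨fun ⟨hs, hlt⟩ => ?_, fun ⟨n, hs, hlt⟩ => ⟨hs, lt_of_le_of_lt (sInf_le (hu_mem n)) hlt⟩⟩
    obtain ⟨n, hn⟩ := (hu_lim.eventually (gt_mem_nhds hlt)).exists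
    exact ⟨n, hs, hn⟩
  have hmono : Monotone fun n => {s ∈ Ioo (0:ℝ) 1 | u n < f s} :=
    fun m n hmn s hs => ⟨hs.1, (hu_anti hmn).trans_lt hs.2⟩
  rw [hunion, hmono.measure_iUnion]
  exact iSup_le hu_mem

lemma rearr_add_le_essSup_add (u v : ℝ → ℝ≥0∞) (t : ℝ) :
    rearr (fun s => u s + v s) t ≤ essSup u (volume.restrict (Ioo (0:ℝ) 1)) + rearr v t := by
  unfold rearr
  rw [ENNReal.add_sInf]
  refine le_iInf₂ fun l hl => sInf_le ?_
  simp only [mem_ofPred_eq, volume_sep_Ioo_eq_restrict] at hl ⊢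
  refine le_trans ?_ hl
  refine measure_mono_ae ((ae_le_essSup (f := u)).mono fun s hs hlt => ?_)
  by_contra hvs
  exact (add_le_add hs (not_lt.1 hvs)).not_gt hlt

lemma rearr_le_of_antitoneOn {g : ℝ → ℝ≥0∞} (hg : AntitoneOn g (Ioo 0 1)) {t : ℝ}
    (ht : t ∈ Ioo (0:ℝ) 1) : rearr g t ≤ g t := by
  refine sInf_le (?_ : volume _ ≤ _)
  calc volume {s ∈ Ioo (0:ℝ) 1 | g t < g s} ≤ volume (Ioo 0 t) :=
        measure_mono fun s hs => ⟨hs.1.1, lt_of_not_ge fun hts => (hg ht hs.1 hts).not_gt hs.2⟩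
    _ = ENNReal.ofReal t := by rw [Real.volume_Ioo, sub_zero]

lemma rearr_tsub_rearr_eq_zero (f : ℝ → ℝ≥0∞) {t s : ℝ} (hts : t ≤ s) :
    rearr (fun u => f u - rearr f t) s = 0 := by
  refine nonpos_iff_eq_zero.1 (sInf_le ?_)
  simp only [mem_ofPred_eq, tsub_pos_iff_lt]
  exact (volume_rearr_lt_le f t).trans (ENNReal.ofReal_le_ofReal hts)

def weightedSup (I : ℝ → ℝ) (f : ℝ → ℝ≥0∞) (t : ℝ) : ℝ≥0∞ :=
  ⨆ s ∈ Ioc (0:ℝ) t, ENNReal.ofReal (I s) * rearr f s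

section weightedSup

variable {I : ℝ → ℝ} {f : ℝ → ℝ≥0∞}

lemma SI_eq_inv_mul_weightedSup (t : ℝ) :
    SI I f t = (ENNReal.ofReal (I t))⁻¹ * weightedSup I f t := rfl

lemma weightedSup_mono : Monotone (weightedSup I f) :=
  fun _ _ h => biSup_mono fun _ hs => ⟨hs.1, hs.2.trans h⟩

lemma le_weightedSup {s t : ℝ} (hs : s ∈ Ioc 0 t) :
    ENNReal.ofReal (I s) * rearr f s ≤ weightedSup I f t :=
  le_biSup (fun s => ENNReal.ofReal (I s) * rearr f s) hs

lemma ofReal_mul_SI {t : ℝ} (hIt : 0 < I t) :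
    ENNReal.ofReal (I t) * SI I f t = weightedSup I f t :=
  ENNReal.mul_inv_cancel_left (ENNReal.ofReal_pos.2 hIt).ne' ENNReal.ofReal_ne_top

lemma rearr_le_SI {t : ℝ} (ht : 0 < t) (hIt : 0 < I t) : rearr f t ≤ SI I f t :=
  (ENNReal.mul_le_iff_le_inv (ENNReal.ofReal_pos.2 hIt).ne' ENNReal.ofReal_ne_top).1
    (le_weightedSup ⟨ht, le_rfl⟩)

lemma SI_antitoneOn (hI : MonotoneOn I (Ioo 0 1)) (hIpos : ∀ t ∈ Ioo (0:ℝ) 1, 0 < I t) :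
    AntitoneOn (SI I f) (Ioo 0 1) := by
  intro t₁ ht₁ t₂ ht₂ h
  have hI₂ := hIpos t₂ ht₂
  rw [SI_eq_inv_mul_weightedSup, ENNReal.inv_mul_le_iff (ENNReal.ofReal_pos.2 hI₂).ne'
    ENNReal.ofReal_ne_top]
  refine iSup₂_le fun s hs => ?_
  rcases le_or_gt s t₁ with hst | hst
  · calc ENNReal.ofReal (I s) * rearr f s ≤ ENNReal.ofReal (I t₁) * SI I f t₁ := by
          rw [ofReal_mul_SI (hIpos t₁ ht₁)]; exact le_weightedSup ⟨hs.1, hst⟩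
      _ ≤ ENNReal.ofReal (I t₂) * SI I f t₁ := by gcongr; exact hI ht₁ ht₂ h
  · calc ENNReal.ofReal (I s) * rearr f s ≤ ENNReal.ofReal (I t₂) * rearr f t₁ := by
          gcongr
          · exact hI ⟨hs.1, hs.2.trans_lt ht₂.2⟩ ht₂ hs.2
          · exact rearr_antitone f hst.le
      _ ≤ ENNReal.ofReal (I t₂) * SI I f t₁ := by gcongr; exact rearr_le_SI ht₁.1 (hIpos t₁ ht₁)

lemma mNorm_le_weightedSup {h : ℝ → ℝ≥0∞} {t : ℝ} (hle : ∀ s, rearr h s ≤ rearr f s)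
    (hzero : ∀ s, t < s → rearr h s = 0) : mNorm I h ≤ weightedSup I f t := by
  refine iSup₂_le fun s hs => ?_
  rcases le_or_gt s t with hst | hst
  · exact (mul_le_mul_right (hle s) _).trans (le_weightedSup ⟨hs.1, hst⟩)
  · simp [hzero s hst]

end weightedSup

lemma rearr_le_two_mul_SI {I : ℝ → ℝ} {S : (ℝ → ℝ≥0∞) → ℝ → ℝ≥0∞} {K : ℝ≥0∞}
    (hsub : ∀ f g : ℝ → ℝ≥0∞, Measurable f → Measurable g →
      ∀ᵐ t ∂(volume.restrict (Ioo (0:ℝ) 1)), S (fun s => f s + g s) t ≤ S f t + S g t)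
    (hinf : ∀ f : ℝ → ℝ≥0∞, Measurable f →
      essSup (S f) (volume.restrict (Ioo (0:ℝ) 1)) ≤ K * essSup f (volume.restrict (Ioo (0:ℝ) 1)))
    (hmi : ∀ f : ℝ → ℝ≥0∞, Measurable f → mNorm I (S f) ≤ K * mNorm I f)
    {f : ℝ → ℝ≥0∞} (hf : Measurable f) {t : ℝ} (ht : t ∈ Ioo (0:ℝ) 1) (hIt : 0 < I t) :
    rearr (S f) t ≤ 2 * K * SI I f t := by
  set lam := rearr f t
  set g : ℝ → ℝ≥0∞ := fun s => min (f s) lam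
  set h : ℝ → ℝ≥0∞ := fun s => f s - lam
  have hg : Measurable g := hf.min measurable_const
  have hh : Measurable h := hf.sub measurable_const
  have hsplit : (fun s => g s + h s) = f := funext fun s => by rw [add_comm]; exact tsub_add_min
  have hSg : essSup (S g) (volume.restrict (Ioo (0:ℝ) 1)) ≤ K * SI I f t :=
    calc essSup (S g) _ ≤ K * essSup g (volume.restrict (Ioo (0:ℝ) 1)) := hinf g hg
      _ ≤ K * lam := by
          gcongr; exact essSup_le_of_ae_le lam (Eventually.of_forall fun s => min_le_right _ _)
      _ ≤ K * SI I f t := by gcongr; exact rearr_le_SI ht.1 hIt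
  have hSh : ENNReal.ofReal (I t) * rearr (S h) t ≤ ENNReal.ofReal (I t) * (K * SI I f t) :=
    calc ENNReal.ofReal (I t) * rearr (S h) t ≤ mNorm I (S h) :=
          le_biSup (fun s => ENNReal.ofReal (I s) * rearr (S h) s) ht
      _ ≤ K * mNorm I h := hmi h hh
      _ ≤ K * weightedSup I f t := by
          gcongr
          exact mNorm_le_weightedSup (fun s => rearr_mono (fun u => tsub_le_self) s)
            fun s hs => rearr_tsub_rearr_eq_zero f hs.le
      _ = ENNReal.ofReal (I t) * (K * SI I f t) := by rw [← ofReal_mul_SI hIt]; ring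
  calc rearr (S f) t ≤ rearr (fun s => S g s + S h s) t :=
        rearr_mono_ae (hsplit ▸ hsub g h hg hh) t
    _ ≤ essSup (S g) (volume.restrict (Ioo (0:ℝ) 1)) + rearr (S h) t :=
        rearr_add_le_essSup_add _ _ t
    _ ≤ K * SI I f t + K * SI I f t :=
        add_le_add hSg ((ENNReal.mul_le_mul_iff_right (ENNReal.ofReal_pos.2 hIt).ne'
          ENNReal.ofReal_ne_top).1 hSh)
    _ = 2 * K * SI I f t := by ring

lemma dstar_le_of_rearr_le_SI {I : ℝ → ℝ} (hIpos : ∀ t ∈ Ioo (0:ℝ) 1, 0 < I t) {Ca : ℝ}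
    (hCa : 0 < Ca) (havg : ∀ t ∈ Ioo (0:ℝ) 1,
      ∫⁻ s in Ioo (0:ℝ) t, ENNReal.ofReal (1 / I s) ≤ ENNReal.ofReal (Ca * (t / I t)))
    {G f : ℝ → ℝ≥0∞} {K : ℝ≥0∞} {t : ℝ} (ht : t ∈ Ioo (0:ℝ) 1)
    (hG : ∀ s ∈ Ioo (0:ℝ) t, rearr G s ≤ K * SI I f s) :
    dstar G t ≤ ENNReal.ofReal Ca * K * SI I f t := by
  set B := K * weightedSup I f t
  have hIt := hIpos t ht
  have hRHS : ENNReal.ofReal Ca * K * SI I f t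
      = ENNReal.ofReal Ca * (ENNReal.ofReal (I t))⁻¹ * B := by
    rw [SI_eq_inv_mul_weightedSup]; ring
  by_cases hB : B = ⊤
  · rw [hRHS, hB, ENNReal.mul_top (mul_ne_zero (ENNReal.ofReal_pos.2 hCa).ne'
      (ENNReal.inv_ne_zero.2 ENNReal.ofReal_ne_top))]
    exact le_top
  have hbound : ∀ s ∈ Ioo (0:ℝ) t, rearr G s ≤ ENNReal.ofReal (1 / I s) * B := by
    intro s hs
    rw [one_div, ENNReal.ofReal_inv_of_pos (hIpos s ⟨hs.1, hs.2.trans ht.2⟩)]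
    calc rearr G s ≤ K * SI I f s := hG s hs
      _ ≤ K * ((ENNReal.ofReal (I s))⁻¹ * weightedSup I f t) := by
          rw [SI_eq_inv_mul_weightedSup]; gcongr; exact weightedSup_mono hs.2.le
      _ = (ENNReal.ofReal (I s))⁻¹ * B := by ring
  rw [dstar, ENNReal.inv_mul_le_iff (ENNReal.ofReal_pos.2 ht.1).ne' ENNReal.ofReal_ne_top]
  calc ∫⁻ s in Ioo (0:ℝ) t, rearr G s
      ≤ ∫⁻ s in Ioo (0:ℝ) t, ENNReal.ofReal (1 / I s) * B :=
        setLIntegral_mono' measurableSet_Ioo hbound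
    _ = (∫⁻ s in Ioo (0:ℝ) t, ENNReal.ofReal (1 / I s)) * B := lintegral_mul_const' B _ hB
    _ ≤ ENNReal.ofReal (Ca * (t / I t)) * B := by gcongr; exact havg t ht
    _ = ENNReal.ofReal t * (ENNReal.ofReal Ca * K * SI I f t) := by
        rw [hRHS, div_eq_mul_inv, ENNReal.ofReal_mul hCa.le, ENNReal.ofReal_mul ht.1.le,
          ENNReal.ofReal_inv_of_pos hIt]
        ring

theorem statement8_general (I : ℝ → ℝ)
    (hsm : StrictMonoOn I (Set.Ioo 0 1))
    (hbij : Set.BijOn I (Set.Ioo 0 1) (Set.Ioo 0 1))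
    (S : (ℝ → ℝ≥0∞) → (ℝ → ℝ≥0∞))
    (hsub : ∀ f g : ℝ → ℝ≥0∞, Measurable f → Measurable g →
      ∀ᵐ t ∂(volume.restrict (Set.Ioo (0:ℝ) 1)),
        S (fun s => f s + g s) t ≤ S f t + S g t)
    (C₀ : ℝ) (hC₀ : 0 < C₀)
    (hinf : ∀ f : ℝ → ℝ≥0∞, Measurable f →
      essSup (S f) (volume.restrict (Set.Ioo (0:ℝ) 1)) ≤
        ENNReal.ofReal C₀ * essSup f (volume.restrict (Set.Ioo (0:ℝ) 1)))
    (hmi : ∀ f : ℝ → ℝ≥0∞, Measurable f →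
      mNorm I (S f) ≤ ENNReal.ofReal C₀ * mNorm I f) :
    ∃ C : ℝ, 0 < C ∧
      (∀ f : ℝ → ℝ≥0∞, Measurable f → mNorm I f < ⊤ → ∀ t ∈ Set.Ioo (0:ℝ) 1,
        rearr (S f) t ≤ ENNReal.ofReal C * SI I f t) ∧
      (AvgProp I →
        (∀ f : ℝ → ℝ≥0∞, Measurable f → mNorm I f < ⊤ → ∀ t ∈ Set.Ioo (0:ℝ) 1,
          dstar (S f) t ≤ ENNReal.ofReal C * SI I f t) ∧
        (∀ f : ℝ → ℝ≥0∞, Measurable f → ∀ t ∈ Set.Ioo (0:ℝ) 1,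
          dstar (SI I f) t ≤ ENNReal.ofReal C * SI I f t)) := by
  have hIpos : ∀ t ∈ Ioo (0:ℝ) 1, 0 < I t := fun t ht => (hbij.mapsTo ht).1
  have hrearr : ∀ f : ℝ → ℝ≥0∞, Measurable f → ∀ t ∈ Ioo (0:ℝ) 1,
      rearr (S f) t ≤ ENNReal.ofReal (2 * C₀) * SI I f t := fun f hf t ht => by
    rw [ENNReal.ofReal_mul zero_le_two, ENNReal.ofReal_ofNat]
    exact rearr_le_two_mul_SI hsub hinf hmi hf ht (hIpos t ht)
  by_cases havg : AvgProp I
  swap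
  · exact ⟨2 * C₀, by positivity, fun f hf _ => hrearr f hf, fun h => absurd h havg⟩
  obtain ⟨Ca, hCa, havg⟩ := havg
  refine ⟨(2 * C₀ + 1) * (Ca + 1), by positivity, fun f hf _ t ht => ?_,
    fun _ => ⟨fun f hf _ t ht => ?_, fun f _ t ht => ?_⟩⟩
  · exact (hrearr f hf t ht).trans (mul_le_mul_left (ENNReal.ofReal_le_ofReal (by nlinarith)) _)
  · have h := dstar_le_of_rearr_le_SI hIpos hCa havg ht
      fun s hs => hrearr f hf s ⟨hs.1, hs.2.trans ht.2⟩
    rw [← ENNReal.ofReal_mul hCa.le] at h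
    exact h.trans (mul_le_mul_left (ENNReal.ofReal_le_ofReal (by nlinarith)) _)
  · have h := dstar_le_of_rearr_le_SI (G := SI I f) (K := 1) hIpos hCa havg ht fun s hs => by
      rw [one_mul]
      exact rearr_le_of_antitoneOn (SI_antitoneOn hsm.monotoneOn hIpos) ⟨hs.1, hs.2.trans ht.2⟩
    rw [mul_one] at h
    exact h.trans (mul_le_mul_left (ENNReal.ofReal_le_ofReal (by nlinarith)) _)

/-- Theorem 3.8 / `thm:SImIsNice`.  Let `I ∈ Δ₂` be an increasing bijection
of `(0,1)` onto itself and let `S` be a sublinear operator bounded on `L^∞` and on `m_I`.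
Then `(Sf)^* ≲ S_I f`; if moreover `I` has the average property then also
`(Sf)^{**} ≲ S_I f` and `(S_I f)^{**} ≲ S_I f`. -/
theorem statement8 (I : ℝ → ℝ) (hd2 : Delta2 I)
    (hsm : StrictMonoOn I (Set.Ioo 0 1))
    (hbij : Set.BijOn I (Set.Ioo 0 1) (Set.Ioo 0 1))
    (S : (ℝ → ℝ≥0∞) → (ℝ → ℝ≥0∞))
    (hSmeas : ∀ f : ℝ → ℝ≥0∞, Measurable f → Measurable (S f))
    (hsub : ∀ f g : ℝ → ℝ≥0∞, Measurable f → Measurable g →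
      ∀ᵐ t ∂(volume.restrict (Set.Ioo (0:ℝ) 1)),
        S (fun s => f s + g s) t ≤ S f t + S g t)
    (hhom : ∀ (f : ℝ → ℝ≥0∞) (a : ℝ), 0 ≤ a → Measurable f →
      ∀ᵐ t ∂(volume.restrict (Set.Ioo (0:ℝ) 1)),
        S (fun s => ENNReal.ofReal a * f s) t = ENNReal.ofReal a * S f t)
    (C₀ : ℝ) (hC₀ : 0 < C₀)
    (hinf : ∀ f : ℝ → ℝ≥0∞, Measurable f →
      essSup (S f) (volume.restrict (Set.Ioo (0:ℝ) 1)) ≤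
        ENNReal.ofReal C₀ * essSup f (volume.restrict (Set.Ioo (0:ℝ) 1)))
    (hmi : ∀ f : ℝ → ℝ≥0∞, Measurable f →
      mNorm I (S f) ≤ ENNReal.ofReal C₀ * mNorm I f) :
    ∃ C : ℝ, 0 < C ∧
      (∀ f : ℝ → ℝ≥0∞, Measurable f → mNorm I f < ⊤ → ∀ t ∈ Set.Ioo (0:ℝ) 1,
        rearr (S f) t ≤ ENNReal.ofReal C * SI I f t) ∧
      (AvgProp I →
        (∀ f : ℝ → ℝ≥0∞, Measurable f → mNorm I f < ⊤ → ∀ t ∈ Set.Ioo (0:ℝ) 1,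
          dstar (S f) t ≤ ENNReal.ofReal C * SI I f t) ∧
        (∀ f : ℝ → ℝ≥0∞, Measurable f → ∀ t ∈ Set.Ioo (0:ℝ) 1,
          dstar (SI I f) t ≤ ENNReal.ofReal C * SI I f t)) :=
  statement8_general I hsm hbij S hsub C₀ hC₀ hinf hmi
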